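/- For the SINDy bio-model ẋ(t) = a − b y(t), ẏ(t) = [t ≥ τ](c + e x(t)²) with a, b, c, e > 0, x(0)=y(0)=0 and y ≡ 0 on [0,τ], the solution eventually satisfies x(t) < 0 for sufficiently large t. -/

import Mathlib

/-!
Since `ẏ ≥ c > 0` from time `τ` on, `y` grows at least linearly and tends to `+∞`. Hence
`ẋ = a - b y ≤ -1` eventually, so `x` decreases at least linearly and tends to `-∞`.
-/

open Set Filter

theorem mul_sub_le_image_sub_of_hasDerivWithinAt_Ici {f f' : ℝ → ℝ} {s m : ℝ}
    (hf : ∀ t ∈ Ici s, HasDerivWithinAt f (f' t) (Ici s) t) (hm : ∀ t ∈ Ici s, m ≤ f' t)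
    {t : ℝ} (ht : s ≤ t) : m * (t - s) ≤ f t - f s := by
  have hmono : MonotoneOn (fun u => f u - u * m) (Ici s) :=
    monotoneOn_of_hasDerivWithinAt_nonneg (convex_Ici s) (f' := fun u => f' u - m)
      (fun u hu => ((hf u hu).sub (hasDerivAt_mul_const m).hasDerivWithinAt).continuousWithinAt)
      (fun u hu => ((hf u (interior_subset hu)).sub
        (hasDerivAt_mul_const m).hasDerivWithinAt).mono interior_subset)
      (fun u hu => sub_nonneg.2 (hm u (interior_subset hu)))
  have := hmono self_mem_Ici ht ht
  simp only at this
  linarith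

theorem tendsto_atTop_of_hasDerivWithinAt_Ici {f f' : ℝ → ℝ} {s m : ℝ} (hm₀ : 0 < m)
    (hf : ∀ t ∈ Ici s, HasDerivWithinAt f (f' t) (Ici s) t) (hm : ∀ t ∈ Ici s, m ≤ f' t) :
    Tendsto f atTop atTop := by
  have hlin : Tendsto (fun t => f s + m * (t - s)) atTop atTop :=
    tendsto_atTop_add_const_left _ _
      ((tendsto_atTop_add_const_right _ _ tendsto_id).const_mul_atTop hm₀)
  refine tendsto_atTop_mono' _ ?_ hlin
  filter_upwards [eventually_ge_atTop s] with t ht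
  linarith [mul_sub_le_image_sub_of_hasDerivWithinAt_Ici hf hm ht]

theorem bio_model_eventually_negative_general (a b c e τ : ℝ)
    (hb : 0 < b) (hc : 0 < c) (he : 0 < e)
    (x y : ℝ → ℝ)
    (hx : ∀ t ∈ Set.Ici (0 : ℝ), HasDerivWithinAt x (a - b * y t) (Set.Ici 0) t)
    (hy : ∀ t ∈ Set.Ici τ, HasDerivWithinAt y (c + e * (x t) ^ 2) (Set.Ici τ) t) :
    ∃ T : ℝ, ∀ t ≥ T, x t < 0 := by
  have hy_top : Tendsto y atTop atTop :=
    tendsto_atTop_of_hasDerivWithinAt_Ici hc hy fun t _ =>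
      le_add_of_nonneg_right (by positivity)
  have hby_top : Tendsto (fun t => b * y t + -a) atTop atTop :=
    tendsto_atTop_add_const_right _ _ (hy_top.const_mul_atTop hb)
  obtain ⟨T, hT⟩ := eventually_atTop.1 <|
    (eventually_ge_atTop 0).and (hby_top.eventually_ge_atTop 1)
  have hx_T : ∀ t ∈ Ici T, HasDerivWithinAt (fun u => -x u) (-(a - b * y t)) (Ici T) t :=
    fun t ht => ((hx t ((hT T le_rfl).1.trans ht)).mono
      (Ici_subset_Ici.2 (hT T le_rfl).1)).neg
  have hx_bot : Tendsto x atTop atBot :=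
    tendsto_neg_atTop_iff.1 <| tendsto_atTop_of_hasDerivWithinAt_Ici one_pos hx_T
      fun t ht => by linarith [(hT t ht).2]
  exact eventually_atTop.1 (hx_bot.eventually_lt_atBot 0)

/-- In the SINDy bio-model `ẋ = a - b y`, `ẏ = c + e x²` for `t ≥ τ` (and `y ≡ 0`
on `[0, τ]`) with `a, b, c, e, τ > 0` and `x(0) = y(0) = 0`, the solution eventually
satisfies `x(t) < 0` for all sufficiently large `t`. -/
theorem bio_model_eventually_negative (a b c e τ : ℝ)
    (ha : 0 < a) (hb : 0 < b) (hc : 0 < c) (he : 0 < e) (hτ : 0 < τ)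
    (x y : ℝ → ℝ) (hx0 : x 0 = 0) (hy0 : y 0 = 0)
    (hyhist : ∀ t ∈ Set.Icc (0 : ℝ) τ, y t = 0)
    (hx : ∀ t ∈ Set.Ici (0 : ℝ), HasDerivWithinAt x (a - b * y t) (Set.Ici 0) t)
    (hy : ∀ t ∈ Set.Ici τ, HasDerivWithinAt y (c + e * (x t) ^ 2) (Set.Ici τ) t) :
    ∃ T : ℝ, ∀ t ≥ T, x t < 0 :=
  bio_model_eventually_negative_general a b c e τ hb hc he x y hx hy
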